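/- arXiv:1605.01447 — 3 statements merged into one kernel-verified Lean document; each statement's English description precedes it below -/
import Mathlib

section
/- The formal power series Σ_{k≥0} H(k) z^k, where H(0)=H(1)=0, H(2)=4, H(3)=20, and H(k) = 3k² + k − 6 for k > 3, equals the rational function 2z²(2 + 4z − z² − 4z³ + 2z⁴)/(1−z)³. -/
/-!
From `k = 4` on, `H` is a quadratic polynomial in `k`, so its third finite difference vanishes
there. The third difference of `H` is the coefficient sequence of `(1 - z)³ · Σ H(k) zᵏ`, which is
therefore a polynomial of degree at most `6`; computing its first seven coefficients identifies it
with the numerator `2z²(2 + 4z - z² - 4z³ + 2z⁴)`.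
-/

open PowerSeries

/-- Hilbert function for the symmetry pseudogroup action on the self-duality equation. -/
noncomputable def Hsde : ℕ → ℚ := fun k =>
  if k < 2 then 0
  else if k = 2 then 4
  else if k = 3 then 20
  else 3 * (k : ℚ) ^ 2 + (k : ℚ) - 6

theorem PowerSeries.coeff_add_three_mul_one_sub_X_pow_three {R : Type*} [CommRing R]
    (f : R⟦X⟧) (n : ℕ) :
    coeff (n + 3) (f * (1 - X) ^ 3) =
      coeff (n + 3) f - 3 * coeff (n + 2) f + 3 * coeff (n + 1) f - coeff n f := by
  have hX1 : coeff (n + 3) (f * X ^ 1) = coeff (n + 2) f := coeff_mul_X_pow f 1 (n + 2)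
  have hX2 : coeff (n + 3) (f * X ^ 2) = coeff (n + 1) f := coeff_mul_X_pow f 2 (n + 1)
  have hX3 : coeff (n + 3) (f * X ^ 3) = coeff n f := coeff_mul_X_pow f 3 n
  have hexpand : f * (1 - X) ^ 3 = f - C 3 * (f * X ^ 1) + C 3 * (f * X ^ 2) - f * X ^ 3 := by
    rw [map_ofNat]; ring
  rw [hexpand, map_sub, map_add, map_sub, coeff_C_mul, coeff_C_mul, hX1, hX2, hX3]

theorem PowerSeries.coeff_ofNat_mul_X_pow {R : Type*} [Semiring R] (a : ℕ) [a.AtLeastTwo]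
    (n k : ℕ) : coeff n ((ofNat(a) : R⟦X⟧) * X ^ k) = if n = k then ofNat(a) else 0 := by
  rw [← map_ofNat C, coeff_C_mul_X_pow]

theorem Hsde_of_four_le {k : ℕ} (hk : 4 ≤ k) : Hsde k = 3 * (k : ℚ) ^ 2 + k - 6 := by
  simp only [Hsde, if_neg (show ¬k < 2 by omega), if_neg (show k ≠ 2 by omega),
    if_neg (show k ≠ 3 by omega)]

theorem mk_Hsde_mul_one_sub_X_pow_three :
    mk Hsde * (1 - X) ^ 3 = 4 * X ^ 2 + 8 * X ^ 3 - 2 * X ^ 4 - 8 * X ^ 5 + 4 * X ^ 6 := by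
  ext n
  obtain hn | hn := lt_or_ge n 3
  · rw [coeff_mul]
    interval_cases n <;> simp [Finset.Nat.antidiagonal_succ, Hsde, coeff_ofNat_mul_X_pow]
  obtain ⟨m, rfl⟩ := Nat.exists_eq_add_of_le' hn
  rw [coeff_add_three_mul_one_sub_X_pow_three]
  obtain hm | hm := lt_or_ge m 4
  · interval_cases m <;> norm_num [Hsde, coeff_ofNat_mul_X_pow]
  obtain ⟨k, rfl⟩ := Nat.exists_eq_add_of_le' hm
  have hdegree : coeff (k + 4 + 3) (4 * X ^ 2 + 8 * X ^ 3 - 2 * X ^ 4 - 8 * X ^ 5 + 4 * X ^ 6 :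
      ℚ⟦X⟧) = 0 := by
    simp [coeff_ofNat_mul_X_pow]
  simp only [hdegree, coeff_mk]
  rw [Hsde_of_four_le (by omega), Hsde_of_four_le (by omega), Hsde_of_four_le (by omega),
    Hsde_of_four_le (by omega)]
  push_cast
  ring

theorem stmt_4 :
    PowerSeries.mk Hsde =
      2 * (X : PowerSeries ℚ) ^ 2 * (2 + 4 * X - X ^ 2 - 4 * X ^ 3 + 2 * X ^ 4)
        * ((1 - (X : PowerSeries ℚ))⁻¹) ^ 3 := by
  have hinv : (1 - X : ℚ⟦X⟧) * (1 - X)⁻¹ = 1 := PowerSeries.mul_inv_cancel _ (by simp)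
  calc mk Hsde = mk Hsde * (1 - X) ^ 3 * ((1 - X)⁻¹) ^ 3 := by
        rw [mul_assoc, ← mul_pow, hinv, one_pow, mul_one]
    _ = _ := by
        rw [mk_Hsde_mul_one_sub_X_pow_three]
        ring
end

section
/- On R⁴ with coordinates (t,x,y,z), for smooth functions f, g of (t,z), the Lie bracket of the vector fields X₄(f) = f ∂_x and X₅(g) = g ∂_y (lifted as X₄(f) = f∂_x − f_t∂_p − (1/2)f_z∂_q and X₅(g) = g∂_y − (1/2)g_t∂_q − g_z∂_r on R⁷ with coordinates (t,x,y,z,p,q,r)) vanishes: [X₄(f), X₅(g)] = 0. -/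
/-- Partial derivative in `t` of a function of `(t,z)`. -/
noncomputable def pdt (f : ℝ × ℝ → ℝ) : ℝ × ℝ → ℝ := fun w => fderiv ℝ f w (1, 0)

/-- Partial derivative in `z` of a function of `(t,z)`. -/
noncomputable def pdz (f : ℝ × ℝ → ℝ) : ℝ × ℝ → ℝ := fun w => fderiv ℝ f w (0, 1)

/-- Lie bracket of vector fields on `ℝ⁷`, viewed as maps `ℝ⁷ → ℝ⁷`. -/
noncomputable def vbracket (X Y : (Fin 7 → ℝ) → (Fin 7 → ℝ)) : (Fin 7 → ℝ) → (Fin 7 → ℝ) :=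
  fun v => fderiv ℝ Y v (X v) - fderiv ℝ X v (Y v)

/-- Coordinates on `ℝ⁷` are `(t,x,y,z,p,q,r)`, indexed `0,…,6`.
`X₄(f) = f ∂_x − f_t ∂_p − (1/2) f_z ∂_q`. -/
noncomputable def X4 (f : ℝ × ℝ → ℝ) : (Fin 7 → ℝ) → (Fin 7 → ℝ) :=
  fun v => ![0, f (v 0, v 3), 0, 0, -pdt f (v 0, v 3), -(1 / 2) * pdz f (v 0, v 3), 0]

/-- `X₅(g) = g ∂_y − (1/2) g_t ∂_q − g_z ∂_r`. -/
noncomputable def X5 (g : ℝ × ℝ → ℝ) : (Fin 7 → ℝ) → (Fin 7 → ℝ) :=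
  fun v => ![0, 0, g (v 0, v 3), 0, 0, -(1 / 2) * pdt g (v 0, v 3), -pdz g (v 0, v 3)]

noncomputable def Pproj : (Fin 7 → ℝ) →L[ℝ] ℝ × ℝ :=
  (ContinuousLinearMap.proj 0).prod (ContinuousLinearMap.proj 3)

lemma key (F : ℝ × ℝ → Fin 7 → ℝ) (hF : Differentiable ℝ F) (v u : Fin 7 → ℝ)
    (h0 : u 0 = 0) (h3 : u 3 = 0) : fderiv ℝ (fun w => F (Pproj w)) v u = 0 := by
  have hc : fderiv ℝ (F ∘ Pproj) v = (fderiv ℝ F (Pproj v)).comp Pproj := by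
    rw [fderiv_comp v (hF _) Pproj.differentiableAt, Pproj.fderiv]
  have h1 : fderiv ℝ (fun w => F (Pproj w)) v u = fderiv ℝ F (Pproj v) (Pproj u) := by
    show fderiv ℝ (F ∘ Pproj) v u = _
    rw [hc]; rfl
  have h2 : Pproj u = 0 := by
    simp [Pproj, h0, h3, Prod.ext_iff]
  rw [h1, h2, map_zero]

lemma pd_diff (h : ℝ × ℝ → ℝ) (hh : ContDiff ℝ (⊤ : ℕ∞) h) :
    Differentiable ℝ (pdt h) ∧ Differentiable ℝ (pdz h) :=
  ⟨((hh.fderiv_right (m := 1) (by exact WithTop.coe_le_coe.mpr (le_top : (((1 + 1 : ℕ) : ℕ∞)) ≤ ⊤))).clm_apply contDiff_const).differentiable one_ne_zero,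
   ((hh.fderiv_right (m := 1) (by exact WithTop.coe_le_coe.mpr (le_top : (((1 + 1 : ℕ) : ℕ∞)) ≤ ⊤))).clm_apply contDiff_const).differentiable one_ne_zero⟩

theorem stmt_15 (f g : ℝ × ℝ → ℝ) (hf : ContDiff ℝ (⊤ : ℕ∞) f) (hg : ContDiff ℝ (⊤ : ℕ∞) g) :
    vbracket (X4 f) (X5 g) = 0 := by
  funext v
  have hF5 : Differentiable ℝ (fun w : ℝ × ℝ =>
      (![0, 0, g w, 0, 0, -(1 / 2) * pdt g w, -pdz g w] : Fin 7 → ℝ)) := by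
    rw [differentiable_pi]
    intro i
    fin_cases i <;>
      simp only [Fin.zero_eta, Fin.mk_one, Fin.reduceFinMk, Matrix.cons_val, Matrix.cons_val_zero, Matrix.cons_val_one, Matrix.head_cons, Matrix.cons_val_succ, Fin.isValue] <;>
      first
        | exact differentiable_const _
        | exact hg.differentiable (by simp)
        | exact (differentiable_const _).mul (pd_diff g hg).1
        | exact (pd_diff g hg).2.neg
  have hF4 : Differentiable ℝ (fun w : ℝ × ℝ =>
      (![0, f w, 0, 0, -pdt f w, -(1 / 2) * pdz f w, 0] : Fin 7 → ℝ)) := by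
    rw [differentiable_pi]
    intro i
    fin_cases i <;>
      simp only [Fin.zero_eta, Fin.mk_one, Fin.reduceFinMk, Matrix.cons_val, Matrix.cons_val_zero, Matrix.cons_val_one, Matrix.head_cons, Matrix.cons_val_succ, Fin.isValue] <;>
      first
        | exact differentiable_const _
        | exact hf.differentiable (by simp)
        | exact (pd_diff f hf).1.neg
        | exact (differentiable_const _).mul (pd_diff f hf).2
  have e5 : X5 g = fun w => (fun p : ℝ × ℝ =>
      (![0, 0, g p, 0, 0, -(1 / 2) * pdt g p, -pdz g p] : Fin 7 → ℝ)) (Pproj w) := by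
    funext w
    simp [X5, Pproj]
  have e4 : X4 f = fun w => (fun p : ℝ × ℝ =>
      (![0, f p, 0, 0, -pdt f p, -(1 / 2) * pdz f p, 0] : Fin 7 → ℝ)) (Pproj w) := by
    funext w
    simp [X4, Pproj]
  have h1 : fderiv ℝ (X5 g) v (X4 f v) = 0 := by
    rw [e5]
    exact key _ hF5 v _ (by simp [X4]) (by simp [X4])
  have h2 : fderiv ℝ (X4 f) v (X5 g v) = 0 := by
    rw [e4]
    exact key _ hF4 v _ (by simp [X5]) (by simp [X5])
  simp [vbracket, h1, h2]
end

section
/- Let 𝔥 ⊂ gl(4,R) be the Lie algebra from the linearized isotropy of the SDE symmetry pseudogroup, acting on T = R⁴ = Π₁ ⊕ Π₂ with Π₁ = ⟨∂_t, ∂_z⟩ and Π₂ = ⟨∂_x, ∂_y⟩, generated by Y₁,…,Y₆ as above. Then Π₂ is the unique proper nonzero 𝔥-invariant subspace of T; in particular there is no 𝔥-invariant complement to Π₂ and no 𝔥-invariant line or hyperplane other than those forced by Π₂ (namely, no invariant 1-dimensional or 3-dimensional subspace exists). -/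
open Matrix

-- Linear vector fields on ℝ⁴ with basis (∂_t,∂_x,∂_y,∂_z) (indices 0,1,2,3),
-- identified with 4×4 matrices.
def Y1 : Matrix (Fin 4) (Fin 4) ℝ := !![1,0,0,0; 0,-1,0,0; 0,0,0,0; 0,0,0,0]
def Y2 : Matrix (Fin 4) (Fin 4) ℝ := !![0,0,0,1; 0,0,0,0; 0,-1,0,0; 0,0,0,0]
def Y3 : Matrix (Fin 4) (Fin 4) ℝ := !![0,0,0,0; 0,0,-1,0; 0,0,0,0; 1,0,0,0]
def Y4 : Matrix (Fin 4) (Fin 4) ℝ := !![0,0,0,0; 0,0,0,0; 0,0,-1,0; 0,0,0,1]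
def Y5 : Matrix (Fin 4) (Fin 4) ℝ := !![0,0,0,0; 0,1,0,0; 0,0,1,0; 0,0,0,0]
def Y6 : Matrix (Fin 4) (Fin 4) ℝ := !![0,0,0,0; 0,0,0,1; -1,0,0,0; 0,0,0,0]

/-- A subspace `W ⊆ ℝ⁴` is 𝔥-invariant if it is preserved by each generator of 𝔥. -/
def HInvariant (W : Submodule ℝ (Fin 4 → ℝ)) : Prop :=
  ∀ Y ∈ ({Y1, Y2, Y3, Y4, Y5, Y6} : Set (Matrix (Fin 4) (Fin 4) ℝ)),
    ∀ w ∈ W, Y.mulVec w ∈ W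

/-- `Π₂ = ⟨∂_x, ∂_y⟩`. -/
def Pi2 : Submodule ℝ (Fin 4 → ℝ) :=
  Submodule.span ℝ {Pi.single (1 : Fin 4) (1 : ℝ), Pi.single (2 : Fin 4) (1 : ℝ)}

/-!
`Y₁ ± Y₁²` and `Y₄ ± Y₄²` are twice the coordinate projections, so an invariant subspace is
spanned by the basis vectors it contains. The off-diagonal generators then act on basis vectors
as `∂_t ↔ ∂_z`, `∂_t ↦ ∂_y`, `∂_x ↔ ∂_y` up to sign: from any basis vector one reaches `∂_x` and
`∂_y`, and from `∂_t` or `∂_z` everything, so `⟨∂_x, ∂_y⟩` is the only proper nonzero invariant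
subspace.
-/

lemma mem_Pi2_iff {v : Fin 4 → ℝ} : v ∈ Pi2 ↔ v 0 = 0 ∧ v 3 = 0 := by
  rw [Pi2, Submodule.mem_span_pair]
  constructor
  · rintro ⟨a, b, rfl⟩
    simp
  · rintro ⟨h0, h3⟩
    refine ⟨v 1, v 2, ?_⟩
    ext i; fin_cases i <;> simp [h0, h3]

lemma finrank_Pi2 : Module.finrank ℝ Pi2 = 2 := by
  have hli : LinearIndependent ℝ ![(Pi.single 1 1 : Fin 4 → ℝ), Pi.single 2 1] := by
    convert (Pi.basisFun ℝ (Fin 4)).linearIndependent.comp ![1, 2] (by decide) using 1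
    ext i : 1; fin_cases i <;> simp
  have := finrank_span_eq_card hli
  rwa [Matrix.range_cons, Matrix.range_cons, Matrix.range_empty, Set.union_empty,
    Set.union_singleton, Set.pair_comm, Fintype.card_fin] at this

lemma hInvariant_Pi2 : HInvariant Pi2 := by
  intro Y hY w hw
  rw [mem_Pi2_iff] at hw ⊢
  rcases hY with rfl | rfl | rfl | rfl | rfl | rfl <;>
    simp [Matrix.mulVec, dotProduct, Fin.sum_univ_four, Y1, Y2, Y3, Y4, Y5, Y6, hw.1, hw.2]

lemma Y1_mulVec (v : Fin 4 → ℝ) : Y1 *ᵥ v = ![v 0, -v 1, 0, 0] := by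
  ext i; fin_cases i <;> simp [Y1, Matrix.mulVec, dotProduct, Fin.sum_univ_four]

lemma Y4_mulVec (v : Fin 4 → ℝ) : Y4 *ᵥ v = ![0, 0, -v 2, v 3] := by
  ext i; fin_cases i <;> simp [Y4, Matrix.mulVec, dotProduct, Fin.sum_univ_four]

namespace HInvariant

variable {W : Submodule ℝ (Fin 4 → ℝ)}

lemma single_mem_of_apply_ne_zero (hW : HInvariant W) {w : Fin 4 → ℝ} (hw : w ∈ W) {i : Fin 4}
    (hi : w i ≠ 0) : Pi.single i 1 ∈ W := by
  have h1 : Y1 *ᵥ w ∈ W := hW Y1 (by simp) w hw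
  have h11 : Y1 *ᵥ (Y1 *ᵥ w) ∈ W := hW Y1 (by simp) _ h1
  have h4 : Y4 *ᵥ w ∈ W := hW Y4 (by simp) w hw
  have h44 : Y4 *ᵥ (Y4 *ᵥ w) ∈ W := hW Y4 (by simp) _ h4
  have hproj : (2 * w i) • Pi.single i (1 : ℝ) ∈ W := by
    fin_cases i
    · convert W.add_mem h1 h11 using 1
      ext j; fin_cases j <;> simp [Y1_mulVec]; ring
    · convert W.sub_mem h11 h1 using 1
      ext j; fin_cases j <;> simp [Y1_mulVec]; ring
    · convert W.sub_mem h44 h4 using 1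
      ext j; fin_cases j <;> simp [Y4_mulVec]; ring
    · convert W.add_mem h4 h44 using 1
      ext j; fin_cases j <;> simp [Y4_mulVec]; ring
  exact (W.smul_mem_iff (mul_ne_zero two_ne_zero hi)).1 hproj

lemma single_mem_of_entry_ne_zero (hW : HInvariant W) {Y : Matrix (Fin 4) (Fin 4) ℝ}
    (hY : Y ∈ ({Y1, Y2, Y3, Y4, Y5, Y6} : Set (Matrix (Fin 4) (Fin 4) ℝ))) {i j : Fin 4}
    (hi : Pi.single i 1 ∈ W) (hji : Y j i ≠ 0) : Pi.single j 1 ∈ W :=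
  hW.single_mem_of_apply_ne_zero (hW Y hY _ hi) (by simpa [Matrix.mulVec_single_one] using hji)

lemma Pi2_le (hW : HInvariant W) (hW0 : W ≠ ⊥) : Pi2 ≤ W := by
  obtain ⟨w, hw, hw0⟩ := W.exists_mem_ne_zero_of_ne_bot hW0
  obtain ⟨i, hi⟩ := Function.ne_iff.1 hw0
  have he2 : Pi.single 2 1 ∈ W := by
    have he := hW.single_mem_of_apply_ne_zero hw hi
    fin_cases i
    · exact hW.single_mem_of_entry_ne_zero (Y := Y6) (by simp) he (by simp [Y6])
    · exact hW.single_mem_of_entry_ne_zero (Y := Y2) (by simp) he (by simp [Y2])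
    · exact he
    · have he0 := hW.single_mem_of_entry_ne_zero (Y := Y2) (j := 0) (by simp) he (by simp [Y2])
      exact hW.single_mem_of_entry_ne_zero (Y := Y6) (by simp) he0 (by simp [Y6])
  have he1 := hW.single_mem_of_entry_ne_zero (Y := Y3) (j := 1) (by simp) he2 (by simp [Y3])
  rw [Pi2, Submodule.span_le, Set.insert_subset_iff, Set.singleton_subset_iff]
  exact ⟨he1, he2⟩

lemma eq_top_of_not_le_Pi2 (hW : HInvariant W) (hle : ¬ W ≤ Pi2) : W = ⊤ := by
  obtain ⟨w, hw, hwPi2⟩ := SetLike.not_le_iff_exists.1 hle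
  have he0 : Pi.single 0 1 ∈ W := by
    rcases not_and_or.1 (mem_Pi2_iff.not.1 hwPi2) with h0 | h3
    · exact hW.single_mem_of_apply_ne_zero hw h0
    · exact hW.single_mem_of_entry_ne_zero (Y := Y2) (by simp)
        (hW.single_mem_of_apply_ne_zero hw h3) (by simp [Y2])
  have he3 := hW.single_mem_of_entry_ne_zero (Y := Y3) (j := 3) (by simp) he0 (by simp [Y3])
  have hPi2 := hW.Pi2_le fun hbot => hle (hbot ▸ bot_le)
  have he1 : Pi.single 1 1 ∈ W := hPi2 (Submodule.subset_span (by simp))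
  have he2 : Pi.single 2 1 ∈ W := hPi2 (Submodule.subset_span (by simp))
  rw [eq_top_iff, ← (Pi.basisFun ℝ (Fin 4)).span_eq, Submodule.span_le]
  rintro _ ⟨i, rfl⟩
  fin_cases i <;> simpa

lemma eq_bot_or_eq_top_or_eq_Pi2 (hW : HInvariant W) : W = ⊥ ∨ W = ⊤ ∨ W = Pi2 := by
  by_cases hbot : W = ⊥
  · exact Or.inl hbot
  by_cases hle : W ≤ Pi2
  · exact Or.inr (Or.inr (le_antisymm hle (hW.Pi2_le hbot)))
  · exact Or.inr (Or.inl (hW.eq_top_of_not_le_Pi2 hle))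

end HInvariant

theorem stmt_19 :
    -- Π₂ is invariant, and it is the only proper nonzero invariant subspace
    HInvariant Pi2 ∧
    (∀ W : Submodule ℝ (Fin 4 → ℝ), HInvariant W → W = ⊥ ∨ W = ⊤ ∨ W = Pi2) ∧
    -- in particular Π₂ has no invariant complement
    (¬ ∃ W : Submodule ℝ (Fin 4 → ℝ), HInvariant W ∧ IsCompl Pi2 W) ∧
    -- and there is no invariant line or hyperplane
    (¬ ∃ W : Submodule ℝ (Fin 4 → ℝ), HInvariant W ∧
      (Module.finrank ℝ W = 1 ∨ Module.finrank ℝ W = 3)) := by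
  have hPi2_ne_bot : Pi2 ≠ ⊥ := fun h => by
    simpa [h] using (mem_Pi2_iff (v := Pi.single 1 1)).2 (by simp)
  have hPi2_ne_top : Pi2 ≠ ⊤ := fun h => by
    simpa using mem_Pi2_iff.1 (h ▸ Submodule.mem_top : Pi.single 0 (1 : ℝ) ∈ Pi2)
  refine ⟨hInvariant_Pi2, fun W hW => hW.eq_bot_or_eq_top_or_eq_Pi2, ?_, ?_⟩
  · rintro ⟨W, hW, hc⟩
    rcases hW.eq_bot_or_eq_top_or_eq_Pi2 with rfl | rfl | rfl
    · exact hPi2_ne_top (eq_top_of_isCompl_bot hc)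
    · exact hPi2_ne_bot (eq_bot_of_isCompl_top hc)
    · exact hPi2_ne_bot (disjoint_self.1 hc.disjoint)
  · rintro ⟨W, hW, hr⟩
    rcases hW.eq_bot_or_eq_top_or_eq_Pi2 with rfl | rfl | rfl <;>
      simp [finrank_Pi2] at hr
end
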